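/- arXiv:1507.03191 — 6 statements merged into one kernel-verified Lean document; each statement's English description precedes it below -/
import Mathlib

section
/- For n ≥ 2 and pairwise distinct nonzero real numbers a_1,...,a_n with a_i a_j ≠ 1 for all i ≠ j, one has ∑_{i=1}^n a_i^{n-2} / ∏_{j≠i} ((a_i − a_j)(1 − a_i a_j)) = 0. -/
/-!
Put `b i = a i + (a i)⁻¹`. Then
`b i - b j = -(a i - a j) * (1 - a i * a j) / (a i * a j)`, so the hypotheses make the `b i`
pairwise distinct, and each summand is a common constant times `(∏ j ≠ i, (b i - b j))⁻¹`.
The sum of these inverses is the coefficient of `X ^ (n - 1)` in the Lagrange interpolant of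
the constant `1` at the nodes `b i`, which vanishes for `n ≥ 2`.
-/

open Finset Polynomial

theorem Lagrange.sum_inv_prod_erase_sub_eq_zero {F ι : Type*} [Field F] [DecidableEq ι]
    {s : Finset ι} {v : ι → F} (hvs : Set.InjOn v s) (hs : 2 ≤ #s) :
    ∑ i ∈ s, (∏ j ∈ s.erase i, (v i - v j))⁻¹ = 0 := by
  have h := coeff_eq_sum hvs (P := 1) (by rw [degree_one]; exact_mod_cast (by omega : 0 < #s))
  rw [coeff_one, if_neg (by omega)] at h
  simpa using h.symm

section AddInv

variable {F : Type*} [Field F] {x y : F}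

theorem add_inv_sub_add_inv (hx : x ≠ 0) (hy : y ≠ 0) :
    x + x⁻¹ - (y + y⁻¹) = -((x - y) * (1 - x * y)) / (x * y) := by
  field_simp
  ring

theorem add_inv_ne_add_inv (hx : x ≠ 0) (hy : y ≠ 0) (hxy : x ≠ y) (hxy' : x * y ≠ 1) :
    x + x⁻¹ ≠ y + y⁻¹ := by
  rw [← sub_ne_zero, add_inv_sub_add_inv hx hy]
  exact div_ne_zero (neg_ne_zero.mpr (mul_ne_zero (sub_ne_zero.mpr hxy)
    (sub_ne_zero.mpr hxy'.symm))) (mul_ne_zero hx hy)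

end AddInv

theorem Finset.prod_erase_mul_left {ι M : Type*} [DecidableEq ι] [CommMonoid M] {s : Finset ι}
    {i : ι} (hi : i ∈ s) (hs : 2 ≤ #s) (a : ι → M) :
    ∏ j ∈ s.erase i, (a i * a j) = a i ^ (#s - 2) * ∏ j ∈ s, a j := by
  rw [prod_mul_distrib, prod_const, card_erase_of_mem hi, ← mul_prod_erase s a hi,
    show #s - 1 = #s - 2 + 1 by omega, pow_succ, mul_assoc]

theorem sum_pow_div_prod_eq_zero (n : ℕ) (hn : 2 ≤ n) (a : Fin n → ℝ)
    (ha : Function.Injective a) (ha0 : ∀ i, a i ≠ 0)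
    (hab : ∀ i j, i ≠ j → a i * a j ≠ 1) :
    ∑ i, a i ^ (n - 2) / ∏ j ∈ univ.erase i, ((a i - a j) * (1 - a i * a j)) = 0 := by
  set b : Fin n → ℝ := fun i ↦ a i + (a i)⁻¹
  have hb : Function.Injective b := fun i j hij ↦ by
    by_contra hne
    exact add_inv_ne_add_inv (ha0 i) (ha0 j) (ha.ne hne) (hab i j hne) hij
  set c : ℝ := (-1) ^ (n - 1) * ∏ j, a j
  have hc : c ≠ 0 := mul_ne_zero (by simp) (prod_ne_zero_iff.mpr fun j _ ↦ ha0 j)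
  have hn' : 2 ≤ #(univ : Finset (Fin n)) := by rwa [card_univ, Fintype.card_fin]
  have hterm : ∀ i, c * (a i ^ (n - 2) / ∏ j ∈ univ.erase i, ((a i - a j) * (1 - a i * a j))) =
      (∏ j ∈ univ.erase i, (b i - b j))⁻¹ := fun i ↦ by
    have hsub : ∀ j ∈ univ.erase i, (b i - b j)⁻¹ =
        a i * a j / -((a i - a j) * (1 - a i * a j)) := fun j _ ↦ by
      rw [add_inv_sub_add_inv (ha0 i) (ha0 j), inv_div]
    rw [← prod_inv_distrib, prod_congr rfl hsub, prod_div_distrib, prod_neg,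
      prod_erase_mul_left (mem_univ i) hn', card_erase_of_mem (mem_univ i), card_univ,
      Fintype.card_fin]
    simp only [c]
    field_simp
    rw [sq, ← mul_pow, neg_one_mul, neg_neg, one_pow, one_mul]
  have hsum := Lagrange.sum_inv_prod_erase_sub_eq_zero hb.injOn hn'
  simp only [← hterm, ← mul_sum] at hsum
  exact (mul_eq_zero.mp hsum).resolve_left hc
end

section
/- For |a| < 1 and every nonnegative integer k, (2/π) ∫_{-1}^{1} √(1−x²) U_k(x) / ((1+a²) − 2ax) dx = a^k. -/
/-!
Substituting `x = cos θ` turns the integral into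
`∫₀^π sin ((k + 1) θ) sin θ / (1 + a² - 2 a cos θ) dθ`. The generating function of the
Chebyshev polynomials, truncated at order `n`, gives
`sin θ / (1 + a² - 2 a cos θ) = ∑_{j < n} a ^ j sin ((j + 1) θ) + O(|a| ^ n)` uniformly in `θ`.
By orthogonality of the sines on `[0, π]`, the finite sum integrates against `sin ((k + 1) θ)`
to exactly `π / 2 · a ^ k` as soon as `n > k`, so the integral differs from `π / 2 · a ^ k` by
`O(|a| ^ n)` for every large `n`.
-/

open Real intervalIntegral Set Filter Topology Polynomial.Chebyshev

theorem integral_neg_one_one_eq_integral_comp_cos_mul_sin (g : ℝ → ℝ) :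
    ∫ x in -1..1, g x = ∫ θ in 0..π, g (cos θ) * sin θ := by
  have h := integral_comp_mul_deriv_of_deriv_nonpos (g := g) (a := 0) (b := π)
    continuous_cos.continuousOn (fun θ _ ↦ hasDerivAt_cos θ)
    (fun θ hθ ↦ by
      rw [min_eq_left pi_pos.le, max_eq_right pi_pos.le] at hθ
      simpa using (sin_pos_of_pos_of_lt_pi hθ.1 hθ.2).le)
  rw [cos_zero, cos_pi, integral_symm (-1)] at h
  rw [← neg_eq_iff_eq_neg.mpr h, ← intervalIntegral.integral_neg]
  simp

theorem sqrt_one_sub_cos_sq_mul_eval_U_cos {θ : ℝ} (hθ : θ ∈ Icc 0 π) (n : ℤ) :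
    √(1 - cos θ ^ 2) * (U ℝ n).eval (cos θ) = sin ((n + 1) * θ) := by
  rw [← sin_sq, sqrt_sq (sin_nonneg_of_nonneg_of_le_pi hθ.1 hθ.2), mul_comm, U_real_cos]

theorem integral_cos_int_mul (m : ℤ) :
    ∫ θ in 0..π, cos (m * θ) = if m = 0 then π else 0 := by
  split_ifs with hm
  · simp [hm]
  · rw [integral_comp_mul_left _ (Int.cast_ne_zero.mpr hm), integral_cos]
    simp [sin_int_mul_pi]

theorem integral_sin_mul_sin_nat_succ (j k : ℕ) :
    ∫ θ in 0..π, sin ((j + 1) * θ) * sin ((k + 1) * θ) = if j = k then π / 2 else 0 := by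
  have h (θ : ℝ) : sin ((j + 1) * θ) * sin ((k + 1) * θ) =
      (cos (((j - k : ℤ) : ℝ) * θ) - cos (((j + k + 2 : ℤ) : ℝ) * θ)) / 2 := by
    rw [eq_div_iff two_ne_zero, mul_comm, ← mul_assoc, two_mul_sin_mul_sin]
    push_cast
    ring_nf
  simp_rw [h]
  rw [intervalIntegral.integral_div,
    integral_sub ((by fun_prop : Continuous _).intervalIntegrable _ _)
      ((by fun_prop : Continuous _).intervalIntegrable _ _),
    integral_cos_int_mul (j - k), integral_cos_int_mul (j + k + 2),
    if_neg (show (j + k + 2 : ℤ) ≠ 0 by omega)]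
  split_ifs <;> first | omega | ring

theorem sq_one_sub_abs_le_one_add_sq_sub_two_mul_mul_cos (a θ : ℝ) :
    (1 - |a|) ^ 2 ≤ 1 + a ^ 2 - 2 * a * cos θ := by
  have : a * cos θ ≤ |a| := (le_abs_self _).trans <| by
    rw [abs_mul]; exact mul_le_of_le_one_right (abs_nonneg a) (abs_cos_le_one θ)
  nlinarith [sq_abs a]

theorem one_add_sq_sub_two_mul_mul_cos_pos {a : ℝ} (ha : |a| < 1) (θ : ℝ) :
    0 < 1 + a ^ 2 - 2 * a * cos θ :=
  (pow_pos (sub_pos.mpr ha) 2).trans_le (sq_one_sub_abs_le_one_add_sq_sub_two_mul_mul_cos a θ)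

theorem abs_sin_mul_sub_div_le {a : ℝ} (ha : |a| < 1) (x y z θ : ℝ) :
    |sin x * (sin y - a * sin z) / (1 + a ^ 2 - 2 * a * cos θ)| ≤ (1 + |a|) / (1 - |a|) ^ 2 := by
  have hpos : 0 < (1 - |a|) ^ 2 := pow_pos (sub_pos.mpr ha) 2
  have hx : |sin x| ≤ 1 := abs_sin_le_one x
  have hyz : |sin y - a * sin z| ≤ 1 + |a| := by
    refine (abs_sub _ _).trans (add_le_add (abs_sin_le_one y) ?_)
    rw [abs_mul]
    exact mul_le_of_le_one_right (abs_nonneg a) (abs_sin_le_one z)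
  rw [abs_div, abs_mul, abs_of_pos (one_add_sq_sub_two_mul_mul_cos_pos ha θ), ← one_mul (1 + |a|)]
  gcongr
  exact sq_one_sub_abs_le_one_add_sq_sub_two_mul_mul_cos a θ

theorem one_add_sq_sub_two_mul_mul_cos_mul_sum (a θ : ℝ) (n : ℕ) :
    (1 + a ^ 2 - 2 * a * cos θ) * ∑ j ∈ Finset.range n, a ^ j * sin ((j + 1) * θ) =
      sin θ - a ^ n * (sin ((n + 1) * θ) - a * sin (n * θ)) := by
  induction n with
  | zero => simp
  | succ n ih =>
    have hrec : sin ((n + 1 + 1) * θ) = 2 * cos θ * sin ((n + 1) * θ) - sin (n * θ) := by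
      have hadd := sin_add ((n + 1) * θ) θ
      have hsub := sin_sub ((n + 1) * θ) θ
      rw [show (n + 1) * θ + θ = (n + 1 + 1) * θ by ring] at hadd
      rw [show (n + 1) * θ - θ = n * θ by ring] at hsub
      linear_combination hadd + hsub
    rw [Finset.sum_range_succ, mul_add, ih]
    push_cast
    rw [hrec]
    ring

theorem eq_of_forall_abs_sub_le_mul_pow {x y C r : ℝ} (hr₀ : 0 ≤ r) (hr₁ : r < 1) (N : ℕ)
    (h : ∀ n ≥ N, |x - y| ≤ C * r ^ n) : x = y := by
  have hlim : Tendsto (fun n ↦ C * r ^ n) atTop (𝓝 0) := by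
    simpa using (tendsto_pow_atTop_nhds_zero_of_lt_one hr₀ hr₁).const_mul C
  exact sub_eq_zero.mp (abs_nonpos_iff.mp (ge_of_tendsto hlim (eventually_atTop.2 ⟨N, h⟩)))

theorem integral_sin_nat_succ_mul_div_mul_sin {a : ℝ} (ha : |a| < 1) (k : ℕ) :
    ∫ θ in 0..π, sin ((k + 1) * θ) / (1 + a ^ 2 - 2 * a * cos θ) * sin θ = π / 2 * a ^ k := by
  have hD (θ : ℝ) := (one_add_sq_sub_two_mul_mul_cos_pos ha θ).ne'
  set R : ℕ → ℝ → ℝ := fun n θ ↦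
    sin ((k + 1) * θ) * (sin ((n + 1) * θ) - a * sin (n * θ)) / (1 + a ^ 2 - 2 * a * cos θ)
  have hsplit (n : ℕ) : ∫ θ in 0..π, sin ((k + 1) * θ) / (1 + a ^ 2 - 2 * a * cos θ) * sin θ =
      (∑ j ∈ Finset.range n, a ^ j * ∫ θ in 0..π, sin ((j + 1) * θ) * sin ((k + 1) * θ)) +
        a ^ n * ∫ θ in 0..π, R n θ := by
    have hpt (θ : ℝ) : sin ((k + 1) * θ) / (1 + a ^ 2 - 2 * a * cos θ) * sin θ =
        ∑ j ∈ Finset.range n, a ^ j * (sin ((j + 1) * θ) * sin ((k + 1) * θ)) + a ^ n * R n θ := by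
      have h := one_add_sq_sub_two_mul_mul_cos_mul_sum a θ n
      simp_rw [R, ← mul_assoc, ← Finset.sum_mul]
      rw [sub_eq_iff_eq_add.mp h.symm]
      have hD₀ := hD θ
      generalize 1 + a ^ 2 - 2 * a * cos θ = D at hD₀ ⊢
      field_simp
    have hR : Continuous (R n) := Continuous.div (by fun_prop) (by fun_prop) hD
    simp_rw [hpt]
    rw [integral_add ((by fun_prop : Continuous _).intervalIntegrable _ _)
        ((hR.const_mul _).intervalIntegrable _ _),
      integral_finsetSum fun j _ ↦ (by fun_prop : Continuous _).intervalIntegrable _ _]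
    simp_rw [integral_const_mul]
  have hsum {n : ℕ} (hn : k < n) :
      ∑ j ∈ Finset.range n, a ^ j * ∫ θ in 0..π, sin ((j + 1) * θ) * sin ((k + 1) * θ) =
        π / 2 * a ^ k := by
    simp_rw [integral_sin_mul_sin_nat_succ, mul_ite, mul_zero]
    rw [Finset.sum_ite_eq', if_pos (Finset.mem_range.mpr hn), mul_comm]
  have hbound (n : ℕ) : |∫ θ in 0..π, R n θ| ≤ (1 + |a|) / (1 - |a|) ^ 2 * π := by
    simpa [abs_of_pos pi_pos] using norm_integral_le_of_norm_le_const (a := 0) (b := π) (f := R n)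
      fun θ _ ↦ abs_sin_mul_sub_div_le ha _ _ _ θ
  refine eq_of_forall_abs_sub_le_mul_pow (C := (1 + |a|) / (1 - |a|) ^ 2 * π) (abs_nonneg a) ha
    (k + 1) fun n hn ↦ ?_
  rw [hsplit n, hsum hn, add_sub_cancel_left, abs_mul, abs_pow, mul_comm]
  exact mul_le_mul_of_nonneg_right (hbound n) (by positivity)

theorem chebyshevU_integral_against_kernel (a : ℝ) (ha : |a| < 1) (k : ℕ) :
    (2 / Real.pi) * ∫ x in (-1 : ℝ)..1,
        Real.sqrt (1 - x ^ 2) * (Polynomial.Chebyshev.U ℝ (k : ℤ)).eval x /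
          ((1 + a ^ 2) - 2 * a * x) =
      a ^ k := by
  have hsubst : ∀ θ ∈ uIcc 0 π,
      √(1 - cos θ ^ 2) * (U ℝ k).eval (cos θ) / (1 + a ^ 2 - 2 * a * cos θ) * sin θ =
        sin ((k + 1) * θ) / (1 + a ^ 2 - 2 * a * cos θ) * sin θ := by
    intro θ hθ
    rw [uIcc_of_le pi_pos.le] at hθ
    rw [sqrt_one_sub_cos_sq_mul_eval_U_cos hθ, Int.cast_natCast]
  rw [integral_neg_one_one_eq_integral_comp_cos_mul_sin, integral_congr hsubst,
    integral_sin_nat_succ_mul_div_mul_sin ha k]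
  field_simp
end

section
/- For distinct reals a₁, a₂ with |a₁|, |a₂| < 1, ∫_{-1}^{1} (2/π)·(1−a₁a₂)·√(1−x²) / (((1+a₁²)−2a₁x)((1+a₂²)−2a₂x)) dx = 1. -/
/-!
Partial fractions give `(1 - a₁a₂) / (P₁P₂) = (a₁/P₁ - a₂/P₂) / (a₁ - a₂)` with
`Pᵢ = 1 + aᵢ² - 2aᵢx`, so everything reduces to `∫₋₁¹ √(1 - x²) / P = π / 2` for `|a| < 1`.
For that, the identity `4a²(1 - x²) = (2(1 + a²) - P) P - (1 - a²)²` splits `4a² √(1 - x²) / P`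
into `(1 + a² + 2ax) / √(1 - x²)`, integrated by `arcsin` and `√(1 - x²)`, and
`(1 - a²)² / (P √(1 - x²))`, integrated by an arctangent in the half-angle variable. The three
pieces contribute `(1 + a²)π`, `0` and `-(1 - a²)π`.
-/

open Real Set intervalIntegral

lemma one_add_sq_sub_two_mul_mul_pos {a x : ℝ} (ha : |a| < 1) (hx : x ∈ Icc (-1 : ℝ) 1) :
    0 < 1 + a ^ 2 - 2 * a * x := by
  have hax : a * x ≤ |a| :=
    (le_abs_self _).trans <| by
      rw [abs_mul]; exact mul_le_of_le_one_right (abs_nonneg a) (abs_le.mpr hx)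
  nlinarith [sq_abs a, abs_nonneg a]

lemma hasDerivAt_sqrt_one_sub_sq {x : ℝ} (hx : x ∈ Ioo (-1 : ℝ) 1) :
    HasDerivAt (fun y ↦ √(1 - y ^ 2)) (-x / √(1 - x ^ 2)) x := by
  have h : 0 < 1 - x ^ 2 := by nlinarith [hx.1, hx.2]
  convert ((hasDerivAt_pow 2 x).const_sub 1).sqrt h.ne' using 1
  field_simp
  ring

lemma hasDerivAt_div_one_add_sqrt_one_sub_sq {x : ℝ} (hx : x ∈ Ioo (-1 : ℝ) 1) :
    HasDerivAt (fun y ↦ y / (1 + √(1 - y ^ 2)))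
      (1 / (√(1 - x ^ 2) * (1 + √(1 - x ^ 2)))) x := by
  have h : 0 < 1 - x ^ 2 := by nlinarith [hx.1, hx.2]
  have hs : 0 < √(1 - x ^ 2) := sqrt_pos.mpr h
  have hs2 : √(1 - x ^ 2) ^ 2 = 1 - x ^ 2 := sq_sqrt h.le
  refine ((hasDerivAt_id' x).div ((hasDerivAt_sqrt_one_sub_sq hx).const_add 1)
    (by positivity)).congr_deriv ?_
  field_simp
  linear_combination hs2

/-- With `x = sin θ`, the inner quotient `x / (1 + √(1 - x²))` is `tan (θ / 2)`. -/
noncomputable def poissonArctan (a x : ℝ) : ℝ :=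
  arctan (((1 + a ^ 2) * (x / (1 + √(1 - x ^ 2))) - 2 * a) / (1 - a ^ 2))

lemma continuous_poissonArctan (a : ℝ) : Continuous (poissonArctan a) := by
  have : ∀ y : ℝ, 1 + √(1 - y ^ 2) ≠ 0 := fun y ↦ by positivity
  unfold poissonArctan
  fun_prop (disch := assumption)

lemma hasDerivAt_poissonArctan {a x : ℝ} (ha : |a| < 1) (hx : x ∈ Ioo (-1 : ℝ) 1) :
    HasDerivAt (poissonArctan a)
      ((1 - a ^ 2) / (2 * (1 + a ^ 2 - 2 * a * x) * √(1 - x ^ 2))) x := by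
  have h : 0 < 1 - x ^ 2 := by nlinarith [hx.1, hx.2]
  have hs : 0 < √(1 - x ^ 2) := sqrt_pos.mpr h
  have hs2 : √(1 - x ^ 2) ^ 2 = 1 - x ^ 2 := sq_sqrt h.le
  have ha2 : 0 < 1 - a ^ 2 := by nlinarith [abs_lt.mp ha, sq_abs a, abs_nonneg a]
  have hP := one_add_sq_sub_two_mul_mul_pos ha (Ioo_subset_Icc_self hx)
  unfold poissonArctan
  set s := √(1 - x ^ 2)
  convert ((((hasDerivAt_div_one_add_sqrt_one_sub_sq hx).const_mul (1 + a ^ 2)).sub_const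
    (2 * a)).div_const (1 - a ^ 2)).arctan using 1
  have key : 1 + (((1 + a ^ 2) * (x / (1 + s)) - 2 * a) / (1 - a ^ 2)) ^ 2
      = 2 * (1 + a ^ 2) * (1 + a ^ 2 - 2 * a * x) / ((1 - a ^ 2) ^ 2 * (1 + s)) := by
    field_simp
    linear_combination (1 + a ^ 2) ^ 2 * hs2
  rw [key]
  field_simp
  ring

lemma poissonArctan_one_sub_poissonArctan_neg_one {a : ℝ} (ha : |a| < 1) :
    poissonArctan a 1 - poissonArctan a (-1) = π / 2 := by
  obtain ⟨hl, hr⟩ := abs_lt.mp ha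
  have hm : 0 < 1 - a := by linarith
  have hp : 0 < 1 + a := by linarith
  have hq : 0 < 1 - a ^ 2 := by nlinarith
  have h1 : poissonArctan a 1 = arctan ((1 - a) / (1 + a)) := by
    unfold poissonArctan
    congr 1
    simp only [one_pow, sub_self, sqrt_zero, add_zero, div_one]
    field_simp
    ring
  have h2 : poissonArctan a (-1) = -arctan ((1 - a) / (1 + a))⁻¹ := by
    unfold poissonArctan
    rw [← arctan_neg]
    congr 1
    simp only [neg_one_sq, sub_self, sqrt_zero, add_zero, div_one]
    field_simp
    ring
  rw [h1, h2, sub_neg_eq_add, arctan_inv_of_pos (div_pos hm hp)]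
  ring

noncomputable def poissonPrimitive (a x : ℝ) : ℝ :=
  (1 + a ^ 2) * arcsin x - 2 * a * √(1 - x ^ 2) - 2 * (1 - a ^ 2) * poissonArctan a x

lemma hasDerivAt_poissonPrimitive {a x : ℝ} (ha : |a| < 1) (hx : x ∈ Ioo (-1 : ℝ) 1) :
    HasDerivAt (poissonPrimitive a) (4 * a ^ 2 * (√(1 - x ^ 2) / (1 + a ^ 2 - 2 * a * x))) x := by
  have h : 0 < 1 - x ^ 2 := by nlinarith [hx.1, hx.2]
  have hs : 0 < √(1 - x ^ 2) := sqrt_pos.mpr h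
  have hs2 : √(1 - x ^ 2) ^ 2 = 1 - x ^ 2 := sq_sqrt h.le
  have hP := one_add_sq_sub_two_mul_mul_pos ha (Ioo_subset_Icc_self hx)
  have harcsin : HasDerivAt arcsin (1 / √(1 - x ^ 2)) x :=
    hasDerivAt_arcsin (by linarith [hx.1]) (by linarith [hx.2])
  refine (((harcsin.const_mul _).sub ((hasDerivAt_sqrt_one_sub_sq hx).const_mul _)).sub
    ((hasDerivAt_poissonArctan ha hx).const_mul _)).congr_deriv ?_
  field_simp
  rw [eq_div_iff (by linarith), sub_mul, div_mul_cancel₀ _ (by linarith)]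
  linear_combination (-4 * a ^ 2) * hs2

lemma continuous_poissonPrimitive (a : ℝ) : Continuous (poissonPrimitive a) := by
  unfold poissonPrimitive
  have := continuous_poissonArctan a
  fun_prop

lemma intervalIntegrable_sqrt_one_sub_sq_div {a : ℝ} (ha : |a| < 1) :
    IntervalIntegrable (fun x ↦ √(1 - x ^ 2) / (1 + a ^ 2 - 2 * a * x))
      MeasureTheory.volume (-1) 1 := by
  refine ContinuousOn.intervalIntegrable ?_
  rw [uIcc_of_le (by norm_num)]
  exact ContinuousOn.div (by fun_prop) (by fun_prop)
    fun x hx ↦ (one_add_sq_sub_two_mul_mul_pos ha hx).ne'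

theorem integral_sqrt_one_sub_sq_div {a : ℝ} (ha : |a| < 1) :
    ∫ x in (-1 : ℝ)..1, √(1 - x ^ 2) / (1 + a ^ 2 - 2 * a * x) = π / 2 := by
  rcases eq_or_ne a 0 with rfl | ha0
  · simpa using integral_sqrt_one_sub_sq
  have hftc : ∫ x in (-1 : ℝ)..1, 4 * a ^ 2 * (√(1 - x ^ 2) / (1 + a ^ 2 - 2 * a * x))
      = poissonPrimitive a 1 - poissonPrimitive a (-1) :=
    integral_eq_sub_of_hasDerivAt_of_le (by norm_num) (continuous_poissonPrimitive a).continuousOn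
      (fun x hx ↦ hasDerivAt_poissonPrimitive ha hx)
      ((intervalIntegrable_sqrt_one_sub_sq_div ha).const_mul _)
  have hvalues : poissonPrimitive a 1 - poissonPrimitive a (-1) = 4 * a ^ 2 * (π / 2) := by
    have := poissonArctan_one_sub_poissonArctan_neg_one ha
    simp only [poissonPrimitive, arcsin_one, arcsin_neg_one, one_pow, neg_one_sq, sub_self,
      sqrt_zero]
    linear_combination (-2 * (1 - a ^ 2)) * this
  rw [intervalIntegral.integral_const_mul, hvalues] at hftc
  exact mul_left_cancel₀ (by positivity) hftc

theorem fK2_is_density (a₁ a₂ : ℝ) (hne : a₁ ≠ a₂) (h₁ : |a₁| < 1) (h₂ : |a₂| < 1) :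
    ∫ x in (-1 : ℝ)..1,
        (2 / Real.pi) * (1 - a₁ * a₂) * Real.sqrt (1 - x ^ 2) /
          (((1 + a₁ ^ 2) - 2 * a₁ * x) * ((1 + a₂ ^ 2) - 2 * a₂ * x)) = 1 := by
  have hd : a₁ - a₂ ≠ 0 := sub_ne_zero.mpr hne
  have hsplit : EqOn
      (fun x ↦ 2 / π * (1 - a₁ * a₂) * √(1 - x ^ 2) /
        ((1 + a₁ ^ 2 - 2 * a₁ * x) * (1 + a₂ ^ 2 - 2 * a₂ * x)))
      (fun x ↦ 2 / π / (a₁ - a₂) * (a₁ * (√(1 - x ^ 2) / (1 + a₁ ^ 2 - 2 * a₁ * x))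
        - a₂ * (√(1 - x ^ 2) / (1 + a₂ ^ 2 - 2 * a₂ * x))))
      (uIcc (-1) 1) := by
    intro x hx
    rw [uIcc_of_le (by norm_num)] at hx
    have := (one_add_sq_sub_two_mul_mul_pos h₁ hx).ne'
    have := (one_add_sq_sub_two_mul_mul_pos h₂ hx).ne'
    field_simp
    ring
  rw [integral_congr hsplit, intervalIntegral.integral_const_mul,
    integral_sub ((intervalIntegrable_sqrt_one_sub_sq_div h₁).const_mul a₁)
      ((intervalIntegrable_sqrt_one_sub_sq_div h₂).const_mul a₂),
    intervalIntegral.integral_const_mul, intervalIntegral.integral_const_mul,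
    integral_sqrt_one_sub_sq_div h₁, integral_sqrt_one_sub_sq_div h₂]
  field_simp
end

section
/- For real ρ with |ρ| < 1 and x, y ∈ [−1,1], (1−ρ²)/((1−ρ²)² − 4xyρ(1+ρ²) + 4ρ²(x²+y²)) = ∑_{j=0}^∞ ρ^j U_j(x) U_j(y), where U_j is the Chebyshev polynomial of the second kind (Poisson–Mehler formula at q = 0). -/
/-!
Write `x = cos θ`, `y = cos φ`. The products `U_n(x) U_n(y)` satisfy a four-term linear recurrence
whose characteristic roots are `e^{±iθ±iφ}`; its reversed characteristic polynomial is
`w(x,y|ρ) = (1 - 2ρ cos(θ+φ) + ρ²) (1 - 2ρ cos(θ-φ) + ρ²)`, which is positive for `|ρ| < 1`.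
Since `|U_n| ≤ n + 1` on `[-1, 1]`, the series converges absolutely, and multiplying its sum by
`w` and shifting indices cancels everything except the initial terms, which add up to `1 - ρ²`.
-/

open Polynomial Polynomial.Chebyshev Real

theorem summable_add_one_sq_mul_geometric {r : ℝ} (hr : |r| < 1) :
    Summable fun n : ℕ => ((n : ℝ) + 1) ^ 2 * r ^ n := by
  have hr' : ‖r‖ < 1 := hr
  refine (((summable_pow_mul_geometric_of_norm_lt_one 2 hr').add
    ((summable_pow_mul_geometric_of_norm_lt_one 1 hr').mul_left 2)).add
    (summable_geometric_of_norm_lt_one hr')).congr fun n => ?_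
  ring

theorem one_sub_two_mul_mul_add_sq_pos {ρ c : ℝ} (hρ : |ρ| < 1) (hc : |c| ≤ 1) :
    0 < 1 - 2 * ρ * c + ρ ^ 2 := by
  have hρc : ρ * c ≤ |ρ| :=
    calc ρ * c ≤ |ρ * c| := le_abs_self _
      _ = |ρ| * |c| := abs_mul ρ c
      _ ≤ |ρ| := mul_le_of_le_one_right (abs_nonneg ρ) hc
  nlinarith [sq_abs ρ, abs_nonneg ρ]

namespace Polynomial.Chebyshev

section CommRing

variable {R : Type*} [CommRing R]

noncomputable def UProd (x y : R) (n : ℤ) : R := (U R n).eval x * (U R n).eval y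

def poissonMehlerDenom (ρ x y : R) : R :=
  (1 - ρ ^ 2) ^ 2 - 4 * x * y * ρ * (1 + ρ ^ 2) + 4 * ρ ^ 2 * (x ^ 2 + y ^ 2)

theorem UProd_add_four (x y : R) (n : ℤ) :
    UProd x y (n + 4) = 4 * x * y * UProd x y (n + 3)
      - (4 * x ^ 2 + 4 * y ^ 2 - 2) * UProd x y (n + 2)
      + 4 * x * y * UProd x y (n + 1) - UProd x y n := by
  have h2 := U_add_two R n
  have h3 : U R (n + 3) = 2 * X * U R (n + 2) - U R (n + 1) := by
    simpa only [add_assoc, Int.reduceAdd] using U_add_two R (n + 1)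
  have h4 : U R (n + 4) = 2 * X * U R (n + 3) - U R (n + 2) := by
    simpa only [add_assoc, Int.reduceAdd] using U_add_two R (n + 2)
  simp only [UProd, h4, h3, h2, eval_sub, eval_mul, eval_ofNat, eval_X]
  ring

theorem poissonMehlerDenom_mul_eq_of_hasSum [TopologicalSpace R] [IsTopologicalRing R]
    [T2Space R] {ρ x y S : R} (h : HasSum (fun n : ℕ => ρ ^ n * UProd x y n) S) :
    poissonMehlerDenom ρ x y * S = 1 - ρ ^ 2 := by
  set f : ℕ → R := fun n => ρ ^ n * UProd x y n
  have shift (k : ℕ) := (hasSum_nat_add_iff' k).mpr h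
  have hcomb := ((((shift 4).sub ((shift 3).mul_left (4 * x * y * ρ))).add
    ((shift 2).mul_left ((4 * x ^ 2 + 4 * y ^ 2 - 2) * ρ ^ 2))).sub
    ((shift 1).mul_left (4 * x * y * ρ ^ 3))).add ((shift 0).mul_left (ρ ^ 4))
  have hrec (n : ℕ) : f (n + 4) - 4 * x * y * ρ * f (n + 3)
      + (4 * x ^ 2 + 4 * y ^ 2 - 2) * ρ ^ 2 * f (n + 2)
      - 4 * x * y * ρ ^ 3 * f (n + 1) + ρ ^ 4 * f n = 0 := by
    simp only [f, Nat.cast_add, Nat.cast_ofNat, Nat.cast_one]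
    linear_combination ρ ^ (n + 4) * UProd_add_four x y n
  simp only [add_zero, hrec] at hcomb
  have key := hcomb.unique hasSum_zero
  simp only [Finset.sum_range_succ, Finset.sum_range_zero, f, UProd, Nat.cast_zero, Nat.cast_one,
    Nat.cast_ofNat, pow_zero, pow_one, U_zero, U_one, U_two, eval_one, eval_mul, eval_sub, eval_pow,
    eval_ofNat, eval_X] at key
  -- `U_{-1} = 0`, so the recurrence at `n = -1` expresses the fourth initial term by the first three.
  have hU3 := UProd_add_four x y (-1)
  norm_num [UProd, U_neg_one, U_zero, U_one, U_two] at hU3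
  unfold poissonMehlerDenom
  linear_combination key + ρ ^ 3 * hU3

end CommRing

theorem abs_eval_U_real_le {x : ℝ} (hx : |x| ≤ 1) (n : ℕ) : |(U ℝ n).eval x| ≤ n + 1 := by
  induction n with
  | zero => simp
  | succ n ih =>
    have hT := abs_eval_T_real_le_one ((n : ℤ) + 1) hx
    calc |(U ℝ (n + 1 : ℕ)).eval x|
        = |x * (U ℝ n).eval x + (T ℝ ((n : ℤ) + 1)).eval x| := by
          rw [Nat.cast_succ, U_eq_X_mul_U_add_T]; simp
      _ ≤ |x| * |(U ℝ n).eval x| + 1 := by grw [abs_add_le, abs_mul, hT]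
      _ ≤ 1 * (n + 1) + 1 := by gcongr
      _ = (n + 1 : ℕ) + 1 := by push_cast; ring

theorem abs_UProd_le {x y : ℝ} (hx : |x| ≤ 1) (hy : |y| ≤ 1) (n : ℕ) :
    |UProd x y n| ≤ ((n : ℝ) + 1) ^ 2 := by
  rw [UProd, abs_mul, sq]
  exact mul_le_mul (abs_eval_U_real_le hx n) (abs_eval_U_real_le hy n) (abs_nonneg _)
    (by positivity)

theorem summable_pow_mul_UProd {ρ x y : ℝ} (hρ : |ρ| < 1) (hx : |x| ≤ 1) (hy : |y| ≤ 1) :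
    Summable fun n : ℕ => ρ ^ n * UProd x y n :=
  (summable_add_one_sq_mul_geometric (r := |ρ|) (by rwa [abs_abs])).of_norm_bounded fun n => by
    rw [Real.norm_eq_abs, abs_mul, abs_pow, mul_comm]
    exact mul_le_mul_of_nonneg_right (abs_UProd_le hx hy n) (by positivity)

theorem poissonMehlerDenom_cos_cos (ρ a b : ℝ) :
    poissonMehlerDenom ρ (cos a) (cos b)
      = (1 - 2 * ρ * cos (a + b) + ρ ^ 2) * (1 - 2 * ρ * cos (a - b) + ρ ^ 2) := by
  rw [poissonMehlerDenom, cos_add, cos_sub]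
  linear_combination (4 * ρ ^ 2) * (sin b ^ 2 * sin_sq_add_cos_sq a
    + (1 - cos a ^ 2) * sin_sq_add_cos_sq b)

theorem poissonMehlerDenom_pos {ρ x y : ℝ} (hρ : |ρ| < 1) (hx : |x| ≤ 1) (hy : |y| ≤ 1) :
    0 < poissonMehlerDenom ρ x y := by
  obtain ⟨hx₁, hx₂⟩ := abs_le.mp hx
  obtain ⟨hy₁, hy₂⟩ := abs_le.mp hy
  rw [← cos_arccos hx₁ hx₂, ← cos_arccos hy₁ hy₂, poissonMehlerDenom_cos_cos]
  exact mul_pos (one_sub_two_mul_mul_add_sq_pos hρ (abs_cos_le_one _))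
    (one_sub_two_mul_mul_add_sq_pos hρ (abs_cos_le_one _))

theorem hasSum_pow_mul_UProd {ρ x y : ℝ} (hρ : |ρ| < 1) (hx : |x| ≤ 1) (hy : |y| ≤ 1) :
    HasSum (fun n : ℕ => ρ ^ n * UProd x y n) ((1 - ρ ^ 2) / poissonMehlerDenom ρ x y) := by
  have hS := (summable_pow_mul_UProd hρ hx hy).hasSum
  rwa [← poissonMehlerDenom_mul_eq_of_hasSum hS,
    mul_div_cancel_left₀ _ (poissonMehlerDenom_pos hρ hx hy).ne']

end Polynomial.Chebyshev

theorem poisson_mehler_q_zero (ρ x y : ℝ) (hρ : |ρ| < 1)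
    (hx : x ∈ Set.Icc (-1 : ℝ) 1) (hy : y ∈ Set.Icc (-1 : ℝ) 1) :
    HasSum
      (fun j : ℕ => ρ ^ j * (Polynomial.Chebyshev.U ℝ (j : ℤ)).eval x *
        (Polynomial.Chebyshev.U ℝ (j : ℤ)).eval y)
      ((1 - ρ ^ 2) /
        ((1 - ρ ^ 2) ^ 2 - 4 * x * y * ρ * (1 + ρ ^ 2) + 4 * ρ ^ 2 * (x ^ 2 + y ^ 2))) := by
  simpa only [UProd, poissonMehlerDenom, mul_assoc] using
    hasSum_pow_mul_UProd hρ (abs_le.mpr hx) (abs_le.mpr hy)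
end

section
/- Define w(x,y|ρ) = (1−ρ²)² − 4xyρ(1+ρ²) + 4ρ²(x²+y²) and, for |ρ| < 1 and |y| ≤ 1, f(x|y,ρ) = (2/π)·(1−ρ²)·√(1−x²)/w(x,y|ρ) on [−1,1]. Then for every y ∈ [−1,1], ∫_{-1}^{1} f(x|y,ρ) dx = 1. -/
/-!
Substitute `x = cos θ`, `y = cos α`. Then `w` factors as
`|1 - ρ e^{i(θ-α)}|² |1 - ρ e^{i(θ+α)}|²`, and real parts of two geometric series give the
expansion `(1 - ρ²) sin θ sin α / w = ∑ ρⁿ sin((n+1)θ) sin((n+1)α)`. After the substitution the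
integral pairs this series with `sin θ`, and by orthogonality of `sin((n+1)θ)` on `[0, π]` only
the term `n = 0` survives, giving `π/2` times `2/π`. The division by `sin α` in this argument
excludes `y = ±1`; these follow because the integral is continuous in `α`.
-/

open Real Set intervalIntegral

lemma one_sub_two_mul_cos_add_sq_pos {ρ : ℝ} (hρ : |ρ| < 1) (φ : ℝ) :
    0 < 1 - 2 * ρ * cos φ + ρ ^ 2 := by
  have hcos : ρ * cos φ ≤ |ρ| := (le_abs_self _).trans <| by
    rw [abs_mul]
    exact mul_le_of_le_one_right (abs_nonneg ρ) (abs_cos_le_one φ)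
  nlinarith [sq_abs ρ, abs_nonneg ρ]

lemma hasSum_pow_mul_cos_succ_mul {ρ : ℝ} (hρ : |ρ| < 1) (φ : ℝ) :
    HasSum (fun n : ℕ => ρ ^ n * cos ((n + 1) * φ))
      ((cos φ - ρ) / (1 - 2 * ρ * cos φ + ρ ^ 2)) := by
  set u : ℂ := Complex.exp (φ * Complex.I) with hu_def
  have hu : ‖u‖ = 1 := Complex.norm_exp_ofReal_mul_I φ
  have hgeom : HasSum (fun n : ℕ => u * (ρ * u) ^ n) (u * (1 - ρ * u)⁻¹) :=
    (hasSum_geometric_of_norm_lt_one (by simpa [hu] using hρ)).mul_left u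
  convert hgeom.mapL Complex.reCLM using 1
  · funext n
    have : u * (ρ * u) ^ n = (ρ ^ n : ℝ) * Complex.exp (((n + 1) * φ : ℝ) * Complex.I) := by
      rw [mul_pow, mul_left_comm, ← pow_succ', hu_def, ← Complex.exp_nat_mul]
      push_cast
      ring_nf
    simp only [Complex.reCLM_apply, this, Complex.re_ofReal_mul, Complex.exp_ofReal_mul_I_re]
  · have hinv : u * (1 - ρ * u)⁻¹ = (Complex.exp ((-φ : ℝ) * Complex.I) - ρ)⁻¹ := by
      rw [Complex.ofReal_neg, neg_mul, Complex.exp_neg, ← hu_def]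
      have hu0 : u ≠ 0 := Complex.exp_ne_zero _
      field_simp
    rw [Complex.reCLM_apply, hinv, Complex.inv_re, Complex.normSq_apply]
    simp only [Complex.sub_re, Complex.sub_im, Complex.ofReal_re, Complex.ofReal_im,
      Complex.exp_ofReal_mul_I_re, Complex.exp_ofReal_mul_I_im, cos_neg, sin_neg]
    congr 1
    nlinarith [sin_sq_add_cos_sq φ]

noncomputable def kernelDenom (ρ x y : ℝ) : ℝ :=
  (1 - ρ ^ 2) ^ 2 - 4 * x * y * ρ * (1 + ρ ^ 2) + 4 * ρ ^ 2 * (x ^ 2 + y ^ 2)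

lemma kernelDenom_cos_cos (ρ θ α : ℝ) :
    kernelDenom ρ (cos θ) (cos α) =
      (1 - 2 * ρ * cos (θ - α) + ρ ^ 2) * (1 - 2 * ρ * cos (θ + α) + ρ ^ 2) := by
  rw [cos_sub, cos_add, kernelDenom]
  linear_combination (4 * ρ ^ 2 * sin α ^ 2) * sin_sq_add_cos_sq θ +
    (4 * ρ ^ 2 * (1 - cos θ ^ 2)) * sin_sq_add_cos_sq α

lemma kernelDenom_cos_cos_pos {ρ : ℝ} (hρ : |ρ| < 1) (θ α : ℝ) :
    0 < kernelDenom ρ (cos θ) (cos α) := by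
  rw [kernelDenom_cos_cos]
  exact mul_pos (one_sub_two_mul_cos_add_sq_pos hρ _) (one_sub_two_mul_cos_add_sq_pos hρ _)

lemma kernelDenom_pos {ρ x y : ℝ} (hρ : |ρ| < 1) (hx : x ∈ Icc (-1 : ℝ) 1)
    (hy : y ∈ Icc (-1 : ℝ) 1) : 0 < kernelDenom ρ x y := by
  rw [← cos_arccos hx.1 hx.2, ← cos_arccos hy.1 hy.2]
  exact kernelDenom_cos_cos_pos hρ _ _

lemma hasSum_pow_mul_sin_mul_sin {ρ : ℝ} (hρ : |ρ| < 1) (θ α : ℝ) :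
    HasSum (fun n : ℕ => ρ ^ n * (sin ((n + 1) * θ) * sin ((n + 1) * α)))
      ((1 - ρ ^ 2) * sin θ * sin α / kernelDenom ρ (cos θ) (cos α)) := by
  have hsum := ((hasSum_pow_mul_cos_succ_mul hρ (θ - α)).sub
    (hasSum_pow_mul_cos_succ_mul hρ (θ + α))).div_const 2
  have hterm (n : ℕ) : ρ ^ n * (sin ((n + 1) * θ) * sin ((n + 1) * α)) =
      (ρ ^ n * cos ((n + 1) * (θ - α)) - ρ ^ n * cos ((n + 1) * (θ + α))) / 2 := by
    rw [mul_sub, mul_add, cos_sub, cos_add]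
    ring
  have hP₁ := one_sub_two_mul_cos_add_sq_pos hρ (θ - α)
  have hP₂ := one_sub_two_mul_cos_add_sq_pos hρ (θ + α)
  have hvalue : (1 - ρ ^ 2) * sin θ * sin α / kernelDenom ρ (cos θ) (cos α) =
      ((cos (θ - α) - ρ) / (1 - 2 * ρ * cos (θ - α) + ρ ^ 2) -
        (cos (θ + α) - ρ) / (1 - 2 * ρ * cos (θ + α) + ρ ^ 2)) / 2 := by
    rw [kernelDenom_cos_cos, div_sub_div _ _ hP₁.ne' hP₂.ne', div_div,
      div_eq_div_iff (by positivity) (by positivity), cos_sub, cos_add]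
    ring
  simpa only [hterm, hvalue] using hsum

lemma integral_sin_mul_sin_succ_mul (n : ℕ) :
    ∫ θ in (0 : ℝ)..π, sin θ * sin ((n + 1) * θ) = if n = 0 then π / 2 else 0 := by
  have hcos (m : ℕ) : ∫ θ in (0 : ℝ)..π, cos (m * θ) = if m = 0 then π else 0 := by
    rcases eq_or_ne m 0 with rfl | hm
    · simp
    · rw [integral_comp_mul_left cos (Nat.cast_ne_zero.mpr hm), integral_cos]
      simp [hm, sin_nat_mul_pi]
  have hprod (θ : ℝ) : sin θ * sin ((n + 1) * θ) = (cos (n * θ) - cos ((n + 2 : ℕ) * θ)) / 2 := by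
    rw [show (n : ℝ) * θ = (n + 1) * θ - θ by ring, show ((n + 2 : ℕ) : ℝ) * θ = (n + 1) * θ + θ by
      push_cast; ring, cos_sub, cos_add]
    ring
  simp_rw [hprod]
  rw [integral_div, integral_sub (by apply Continuous.intervalIntegrable; fun_prop)
    (by apply Continuous.intervalIntegrable; fun_prop), hcos, hcos]
  rcases eq_or_ne n 0 with rfl | hn <;> simp [*]

lemma hasSum_intervalIntegral_of_norm_le_geometric {E : Type*} [NormedAddCommGroup E]
    [NormedSpace ℝ E] {F : ℕ → ℝ → E} {f : ℝ → E} {C r a b : ℝ} (hr₀ : 0 ≤ r) (hr : r < 1)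
    (hF : ∀ n, Continuous (F n)) (hbound : ∀ n t, ‖F n t‖ ≤ C * r ^ n)
    (hlim : ∀ t, HasSum (fun n => F n t) (f t)) :
    HasSum (fun n => ∫ t in a..b, F n t) (∫ t in a..b, f t) :=
  hasSum_integral_of_dominated_convergence (fun n _ => C * r ^ n)
    (fun n => (hF n).aestronglyMeasurable) (fun n => .of_forall fun t _ => hbound n t)
    (.of_forall fun _ _ => (summable_geometric_of_lt_one hr₀ hr).mul_left C)
    intervalIntegrable_const (.of_forall fun t _ => hlim t)

lemma integral_kernelDenom_of_sin_ne_zero {ρ : ℝ} (hρ : |ρ| < 1) {α : ℝ} (hα : sin α ≠ 0) :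
    ∫ θ in (0 : ℝ)..π, (1 - ρ ^ 2) / kernelDenom ρ (cos θ) (cos α) * sin θ ^ 2 = π / 2 := by
  set c : ℕ → ℝ := fun n => ρ ^ n * sin ((n + 1) * α) / sin α with hc
  have hlim (θ : ℝ) : HasSum (fun n => c n * (sin θ * sin ((n + 1) * θ)))
      ((1 - ρ ^ 2) / kernelDenom ρ (cos θ) (cos α) * sin θ ^ 2) := by
    have hw := (kernelDenom_cos_cos_pos hρ θ α).ne'
    have hvalue : sin θ / sin α * ((1 - ρ ^ 2) * sin θ * sin α / kernelDenom ρ (cos θ) (cos α)) =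
        (1 - ρ ^ 2) / kernelDenom ρ (cos θ) (cos α) * sin θ ^ 2 := by
      field_simp
    rw [← hvalue]
    exact ((hasSum_pow_mul_sin_mul_sin hρ θ α).mul_left _).congr_fun fun n => by ring
  have hbound (n : ℕ) (θ : ℝ) :
      ‖c n * (sin θ * sin ((n + 1) * θ))‖ ≤ |sin α|⁻¹ * |ρ| ^ n := by
    rw [Real.norm_eq_abs, abs_mul, abs_mul, hc, abs_div, abs_mul, abs_pow]
    have := abs_sin_le_one θ
    have := abs_sin_le_one ((n + 1) * θ)
    have := abs_sin_le_one ((n + 1) * α)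
    calc |ρ| ^ n * |sin ((n + 1) * α)| / |sin α| * (|sin θ| * |sin ((n + 1) * θ)|)
        ≤ |ρ| ^ n * 1 / |sin α| * (1 * 1) := by gcongr
      _ = |sin α|⁻¹ * |ρ| ^ n := by ring
  have hsum := hasSum_intervalIntegral_of_norm_le_geometric (a := 0) (b := π) (abs_nonneg ρ) hρ
    (fun n => by fun_prop) hbound hlim
  have hcoeff (n : ℕ) :
      ∫ θ in (0 : ℝ)..π, c n * (sin θ * sin ((n + 1) * θ)) = if n = 0 then π / 2 else 0 := by
    rw [integral_const_mul, integral_sin_mul_sin_succ_mul]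
    rcases eq_or_ne n 0 with rfl | hn <;> simp [*]
  simp only [hcoeff] at hsum
  exact hsum.unique (hasSum_ite_eq 0 (π / 2))

lemma integral_kernelDenom {ρ : ℝ} (hρ : |ρ| < 1) (α : ℝ) :
    ∫ θ in (0 : ℝ)..π, (1 - ρ ^ 2) / kernelDenom ρ (cos θ) (cos α) * sin θ ^ 2 = π / 2 := by
  have hcont : Continuous fun α =>
      ∫ θ in (0 : ℝ)..π, (1 - ρ ^ 2) / kernelDenom ρ (cos θ) (cos α) * sin θ ^ 2 := by
    refine continuous_parametric_intervalIntegral_of_continuous' ?_ 0 π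
    refine .mul (.div continuous_const ?_ fun p => (kernelDenom_cos_cos_pos hρ p.2 p.1).ne')
      (by fun_prop)
    unfold kernelDenom
    fun_prop
  have hdense : Dense {α : ℝ | sin α ≠ 0} := by
    have hzeros : {α : ℝ | sin α = 0}.Countable :=
      (countable_range fun n : ℤ => n * π).mono fun α hα => sin_eq_zero_iff.mp hα
    exact hzeros.dense_compl ℝ
  exact congrFun (hcont.ext_on hdense continuous_const
    fun α hα => integral_kernelDenom_of_sin_ne_zero hρ hα) α

lemma integral_mul_sqrt_one_sub_sq {g : ℝ → ℝ} (hg : ContinuousOn g (Icc (-1) 1)) :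
    ∫ x in (-1 : ℝ)..1, g x * √(1 - x ^ 2) = ∫ θ in (0 : ℝ)..π, g (cos θ) * sin θ ^ 2 := by
  have hsubst := integral_comp_mul_deriv'' (a := 0) (b := π) (f := cos) (f' := fun θ => -sin θ)
    (g := fun x => g x * √(1 - x ^ 2)) continuous_cos.continuousOn
    (fun θ _ => (hasDerivAt_cos θ).hasDerivWithinAt) (by fun_prop)
    ((hg.mul (by fun_prop)).mono (by
      rintro _ ⟨θ, -, rfl⟩
      exact ⟨neg_one_le_cos θ, cos_le_one θ⟩))
  rw [cos_zero, cos_pi] at hsubst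
  calc ∫ x in (-1 : ℝ)..1, g x * √(1 - x ^ 2)
      = -∫ θ in (0 : ℝ)..π, g (cos θ) * √(1 - cos θ ^ 2) * -sin θ := by
        rw [integral_symm, ← hsubst]; rfl
    _ = ∫ θ in (0 : ℝ)..π, g (cos θ) * sin θ ^ 2 := by
        rw [← integral_neg]
        refine integral_congr fun θ hθ => ?_
        rw [uIcc_of_le pi_pos.le] at hθ
        rw [← sin_sq, sqrt_sq (sin_nonneg_of_nonneg_of_le_pi hθ.1 hθ.2)]
        ring

theorem fM1_is_density (ρ y : ℝ) (hρ : |ρ| < 1) (hy : y ∈ Set.Icc (-1 : ℝ) 1) :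
    ∫ x in (-1 : ℝ)..1,
        (2 / Real.pi) * (1 - ρ ^ 2) * Real.sqrt (1 - x ^ 2) /
          ((1 - ρ ^ 2) ^ 2 - 4 * x * y * ρ * (1 + ρ ^ 2) + 4 * ρ ^ 2 * (x ^ 2 + y ^ 2)) = 1 := by
  have hcont : ContinuousOn (fun x => (1 - ρ ^ 2) / kernelDenom ρ x y) (Icc (-1) 1) :=
    continuousOn_const.div (by unfold kernelDenom; fun_prop)
      fun x hx => (kernelDenom_pos hρ hx hy).ne'
  calc _ = 2 / π * ∫ x in (-1 : ℝ)..1, (1 - ρ ^ 2) / kernelDenom ρ x y * √(1 - x ^ 2) := by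
        rw [← integral_const_mul]
        refine integral_congr fun x _ => ?_
        rw [kernelDenom]
        ring
    _ = 2 / π * ∫ θ in (0 : ℝ)..π, (1 - ρ ^ 2) / kernelDenom ρ (cos θ) y * sin θ ^ 2 := by
        rw [integral_mul_sqrt_one_sub_sq hcont]
    _ = 1 := by
        rw [← cos_arccos hy.1 hy.2, integral_kernelDenom hρ]
        field_simp
end

section
/- For |a| < 1 and every m ≥ 1, ∫_{-1}^{1} (U_m(x) − a·U_{m−1}(x)) · (2/π)·√(1−x²)/((1+a²) − 2ax) dx = 0; i.e., the polynomials P_m(x) = U_m(x) − a U_{m−1}(x) integrate to zero against the density f_{K1}(x|a). -/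
/-!
Write `D(x) = 1 + a² - 2ax`. The three-term recurrence of `U` gives
`P_n = D · U_n + a · P_{n+1}`, and `U_n(x) √(1 - x²)` integrates to zero for `n ≥ 1`, because
`(1 - x²) U_n = (T_n - T_{n+2}) / 2` and the `T_k` with `k ≠ 0` have zero mean for the Chebyshev
measure `dx / √(1 - x²)`. Hence `I_n = ∫ P_n f_{K1}` satisfies `I_n = a I_{n+1}`, so
`I_m = a^k I_{m+k}`. The `I_n` are uniformly bounded, since `U_n(cos θ) sin θ = sin((n+1)θ)` and
`D ≥ (1 - |a|)²`, and letting `k → ∞` gives `I_m = 0`.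
-/

open Real Polynomial Polynomial.Chebyshev intervalIntegral MeasureTheory Set Filter

theorem eq_zero_of_eq_mul_succ_of_norm_le {𝕜 : Type*} [NormedField 𝕜] {a : 𝕜} {f : ℕ → 𝕜}
    {C : ℝ} (ha : ‖a‖ < 1) (hf : ∀ n, f n = a * f (n + 1)) (hC : ∀ n, ‖f n‖ ≤ C) : f 0 = 0 := by
  have hpow (k : ℕ) : f 0 = a ^ k * f k := by
    induction k with
    | zero => simp
    | succ k ih => rw [ih, hf k, pow_succ, mul_assoc]
  have hle (k : ℕ) : ‖f 0‖ ≤ ‖a‖ ^ k * C := by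
    rw [hpow k, norm_mul, norm_pow]
    gcongr
    exact hC k
  have hlim : Tendsto (fun k : ℕ => ‖a‖ ^ k * C) atTop (nhds 0) := by
    simpa using (tendsto_pow_atTop_nhds_zero_of_lt_one (norm_nonneg a) ha).mul_const C
  exact norm_le_zero_iff.mp (ge_of_tendsto' hlim hle)

theorem Polynomial.Chebyshev.two_mul_one_sub_X_sq_mul_U (R : Type*) [CommRing R] (n : ℤ) :
    2 * ((1 - X ^ 2) * U R n) = T R n - T R (n + 2) := by
  linear_combination 2 * one_sub_X_sq_mul_U_eq_pol_in_T R n - T_add_two R n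

theorem integral_eval_U_mul_sqrt_one_sub_sq {n : ℤ} (h₀ : n ≠ 0) (h₂ : n + 2 ≠ 0) :
    ∫ x in (-1 : ℝ)..1, (U ℝ n).eval x * √(1 - x ^ 2) = 0 := by
  -- Valid for every `x`: outside `(-1, 1)` both sides vanish since `√` and `⁻¹` send `≤ 0` to `0`.
  have hT (x : ℝ) : (U ℝ n).eval x * √(1 - x ^ 2)
      = ((T ℝ n).eval x - (T ℝ (n + 2)).eval x) / 2 * √(1 - x ^ 2)⁻¹ := by
    have h := congrArg (eval x) (two_mul_one_sub_X_sq_mul_U ℝ n)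
    simp only [eval_mul, eval_sub, eval_pow, eval_X, eval_one, eval_ofNat] at h
    rw [← h, sqrt_inv]
    conv_lhs => rw [← div_sqrt]
    ring
  simp_rw [hT, ← integral_measureT]
  rw [MeasureTheory.integral_div, integral_sub (integrable_measureT (by fun_prop))
      (integrable_measureT (by fun_prop)), integral_eval_T_real_measureT_of_ne_zero h₀,
    integral_eval_T_real_measureT_of_ne_zero h₂]
  simp

theorem abs_eval_U_mul_sqrt_one_sub_sq_le_one (n : ℤ) (x : ℝ) :
    |(U ℝ n).eval x * √(1 - x ^ 2)| ≤ 1 := by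
  by_cases hx : x ∈ Icc (-1 : ℝ) 1
  · have h := U_real_cos (arccos x) n
    rw [cos_arccos hx.1 hx.2, sin_arccos] at h
    rw [h]
    exact abs_sin_le_one _
  · have : 1 - x ^ 2 ≤ 0 := by
      rw [mem_Icc, ← abs_le] at hx
      nlinarith [sq_abs x]
    simp [sqrt_eq_zero'.mpr this]

noncomputable section

def bigHermiteQZero {R : Type*} [CommRing R] (a : R) (n : ℤ) : R[X] := U R n - a • U R (n - 1)

def densityK1 (a x : ℝ) : ℝ := 2 / π * √(1 - x ^ 2) / ((1 + a ^ 2) - 2 * a * x)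

end

theorem eval_bigHermiteQZero {R : Type*} [CommRing R] (a x : R) (n : ℤ) :
    (bigHermiteQZero a n).eval x = (U R n).eval x - a * (U R (n - 1)).eval x := by
  simp [bigHermiteQZero]

theorem eval_bigHermiteQZero_eq_add {R : Type*} [CommRing R] (a x : R) (n : ℤ) :
    (bigHermiteQZero a n).eval x
      = ((1 + a ^ 2) - 2 * a * x) * (U R n).eval x + a * (bigHermiteQZero a (n + 1)).eval x := by
  have h := congrArg (eval x) (U_add_two R (n - 1))
  rw [show n - 1 + 2 = n + 1 by ring, sub_add_cancel] at h
  simp only [eval_sub, eval_mul, eval_ofNat, eval_X] at h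
  rw [eval_bigHermiteQZero, eval_bigHermiteQZero, add_sub_cancel_right]
  linear_combination -a * h

theorem sq_one_sub_abs_le (a : ℝ) {x : ℝ} (hx : x ∈ Icc (-1 : ℝ) 1) :
    (1 - |a|) ^ 2 ≤ (1 + a ^ 2) - 2 * a * x := by
  have : a * x ≤ |a| := by
    calc a * x ≤ |a| * |x| := (le_abs_self _).trans (abs_mul a x).le
      _ ≤ |a| := mul_le_of_le_one_right (abs_nonneg a) (abs_le.mpr hx)
  nlinarith [sq_abs a]

theorem one_add_sq_sub_pos {a : ℝ} (ha : |a| < 1) {x : ℝ} (hx : x ∈ Icc (-1 : ℝ) 1) :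
    0 < (1 + a ^ 2) - 2 * a * x :=
  lt_of_lt_of_le (pow_pos (sub_pos.mpr ha) 2) (sq_one_sub_abs_le a hx)

section

variable {a : ℝ}

theorem continuousOn_densityK1 (ha : |a| < 1) : ContinuousOn (densityK1 a) (Icc (-1) 1) :=
  (by fun_prop : Continuous fun x : ℝ => 2 / π * √(1 - x ^ 2)).continuousOn.div (by fun_prop)
    fun _ hx => (one_add_sq_sub_pos ha hx).ne'

theorem intervalIntegrable_eval_mul_densityK1 (ha : |a| < 1) (p : ℝ[X]) :
    IntervalIntegrable (fun x => p.eval x * densityK1 a x) volume (-1) 1 := by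
  refine ContinuousOn.intervalIntegrable ?_
  rw [uIcc_of_le (by norm_num)]
  exact p.continuousOn_aeval.mul (continuousOn_densityK1 ha)

theorem eval_bigHermiteQZero_mul_densityK1 (ha : |a| < 1) {x : ℝ} (hx : x ∈ Icc (-1 : ℝ) 1)
    (n : ℤ) :
    (bigHermiteQZero a n).eval x * densityK1 a x
      = 2 / π * ((U ℝ n).eval x * √(1 - x ^ 2))
        + a * ((bigHermiteQZero a (n + 1)).eval x * densityK1 a x) := by
  have hD : ((1 + a ^ 2) - 2 * a * x) * densityK1 a x = 2 / π * √(1 - x ^ 2) :=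
    mul_div_cancel₀ _ (one_add_sq_sub_pos ha hx).ne'
  rw [eval_bigHermiteQZero_eq_add]
  linear_combination (U ℝ n).eval x * hD

theorem integral_eval_bigHermiteQZero_mul_densityK1 (ha : |a| < 1) (n : ℤ) :
    ∫ x in (-1 : ℝ)..1, (bigHermiteQZero a n).eval x * densityK1 a x
      = 2 / π * (∫ x in (-1 : ℝ)..1, (U ℝ n).eval x * √(1 - x ^ 2))
        + a * ∫ x in (-1 : ℝ)..1, (bigHermiteQZero a (n + 1)).eval x * densityK1 a x := by
  rw [← intervalIntegral.integral_const_mul, ← intervalIntegral.integral_const_mul,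
    ← integral_add (Continuous.intervalIntegrable (by fun_prop) _ _)
      ((intervalIntegrable_eval_mul_densityK1 ha _).const_mul a)]
  refine integral_congr fun x hx => ?_
  rw [uIcc_of_le (by norm_num)] at hx
  exact eval_bigHermiteQZero_mul_densityK1 ha hx n

theorem abs_eval_bigHermiteQZero_mul_densityK1_le (ha : |a| < 1) {x : ℝ}
    (hx : x ∈ Icc (-1 : ℝ) 1) (n : ℤ) :
    |(bigHermiteQZero a n).eval x * densityK1 a x| ≤ 2 / π * (1 + |a|) / (1 - |a|) ^ 2 := by
  have hD := one_add_sq_sub_pos ha hx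
  have hnum : |(U ℝ n).eval x * √(1 - x ^ 2) - a * ((U ℝ (n - 1)).eval x * √(1 - x ^ 2))|
      ≤ 1 + |a| := by
    refine (abs_sub _ _).trans (add_le_add (abs_eval_U_mul_sqrt_one_sub_sq_le_one n x) ?_)
    rw [abs_mul]
    exact mul_le_of_le_one_right (abs_nonneg a) (abs_eval_U_mul_sqrt_one_sub_sq_le_one _ x)
  calc |(bigHermiteQZero a n).eval x * densityK1 a x|
      = |(U ℝ n).eval x * √(1 - x ^ 2) - a * ((U ℝ (n - 1)).eval x * √(1 - x ^ 2))|
          * (2 / π / ((1 + a ^ 2) - 2 * a * x)) := by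
        rw [eval_bigHermiteQZero, densityK1, ← abs_of_pos (by positivity : 0 < 2 / π / _),
          ← abs_mul]
        ring_nf
    _ ≤ (1 + |a|) * (2 / π / (1 - |a|) ^ 2) := by
        gcongr
        exact sq_one_sub_abs_le a hx
    _ = 2 / π * (1 + |a|) / (1 - |a|) ^ 2 := by ring

theorem integral_eval_bigHermiteQZero_mul_densityK1_eq_zero (ha : |a| < 1) {n : ℤ}
    (hn : 0 < n) :
    ∫ x in (-1 : ℝ)..1, (bigHermiteQZero a n).eval x * densityK1 a x = 0 := by
  set I : ℕ → ℝ :=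
    fun k => ∫ x in (-1 : ℝ)..1, (bigHermiteQZero a (n + k)).eval x * densityK1 a x
  have hstep (k : ℕ) : I k = a * I (k + 1) := by
    simp only [I, integral_eval_bigHermiteQZero_mul_densityK1 ha (n + k),
      integral_eval_U_mul_sqrt_one_sub_sq (by omega : n + k ≠ 0) (by omega : n + k + 2 ≠ 0)]
    rw [mul_zero, zero_add, Nat.cast_succ, add_assoc]
  have hbound (k : ℕ) : ‖I k‖ ≤ 2 / π * (1 + |a|) / (1 - |a|) ^ 2 * |1 - (-1 : ℝ)| := by
    refine norm_integral_le_of_norm_le_const fun x hx => ?_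
    rw [uIoc_of_le (by norm_num)] at hx
    exact abs_eval_bigHermiteQZero_mul_densityK1_le ha (Ioc_subset_Icc_self hx) _
  simpa [I] using eq_zero_of_eq_mul_succ_of_norm_le (by simpa using ha) hstep hbound

end

theorem bigHermite_q_zero_orthogonal_to_density (a : ℝ) (ha : |a| < 1) (m : ℕ) (hm : 1 ≤ m) :
    ∫ x in (-1 : ℝ)..1,
        ((Polynomial.Chebyshev.U ℝ (m : ℤ)).eval x -
            a * (Polynomial.Chebyshev.U ℝ ((m : ℤ) - 1)).eval x) *
          ((2 / Real.pi) * Real.sqrt (1 - x ^ 2) / ((1 + a ^ 2) - 2 * a * x)) = 0 := by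
  simpa only [eval_bigHermiteQZero, densityK1] using
    integral_eval_bigHermiteQZero_mul_densityK1_eq_zero ha (by omega : (0 : ℤ) < m)
end
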